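/- For every integer k ≥ 3 the following identity holds in F: Σ_{i=0}^{k−2} (−1)^i · Λch(k−i)·S̄ch(k−2−i) + (−1)^k·(x₁x₂x₃)·y⁻¹ = R·y^{k−3}·(x₁x₂x₃)^{2−k}·a(k−2,k−2,0)/Π. (This is the alternating-sum character identity along the Koszul complex K₂, the unique non-exact Koszul complex of the (3|1)-dimensional super vector space: its single one-dimensional homology group, located at Λ₃⊗S₁*, has character x₁x₂x₃/y, the Berezinian/superdeterminant character, and this homology term is exactly the correction to the telescoping formula for ch Im d_{k,k−2}.) -/
import Mathlib


noncomputable section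

/-- The field of rational functions over ℚ in four variables. -/
abbrev F : Type := FractionRing (MvPolynomial (Fin 4) ℚ)

def x1 : F := algebraMap (MvPolynomial (Fin 4) ℚ) F (MvPolynomial.X 0)
def x2 : F := algebraMap (MvPolynomial (Fin 4) ℚ) F (MvPolynomial.X 1)
def x3 : F := algebraMap (MvPolynomial (Fin 4) ℚ) F (MvPolynomial.X 2)
def y  : F := algebraMap (MvPolynomial (Fin 4) ℚ) F (MvPolynomial.X 3)

/-- `R = (x₁+y)(x₂+y)(x₃+y)`. -/
def R : F := (x1 + y) * (x2 + y) * (x3 + y)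

/-- `Π = (x₁−x₂)(x₂−x₃)(x₁−x₃)`. -/
def P : F := (x1 - x2) * (x2 - x3) * (x1 - x3)

/-- `a(t,u,v)` : determinant of the 3×3 matrix with `i`-th row `(xᵢ^{t+2}, xᵢ^{u+1}, xᵢ^v)`. -/
def a (t u v : ℤ) : F :=
  Matrix.det !![x1 ^ (t+2), x1 ^ (u+1), x1 ^ v;
                x2 ^ (t+2), x2 ^ (u+1), x2 ^ v;
                x3 ^ (t+2), x3 ^ (u+1), x3 ^ v]

/-- Complete homogeneous symmetric polynomial of degree `k` in three variables
(`0` for `k < 0`). -/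
def hc (u v w : F) (k : ℤ) : F :=
  if k < 0 then 0
  else ∑ i ∈ Finset.range (k.toNat + 1), ∑ j ∈ Finset.range (k.toNat - i + 1),
    u ^ i * v ^ j * w ^ (k.toNat - i - j)

def h (k : ℤ) : F := hc x1 x2 x3 k

def hbar (k : ℤ) : F := hc x1⁻¹ x2⁻¹ x3⁻¹ k

/-- Elementary symmetric polynomials in `x₁, x₂, x₃`. -/
def e : ℕ → F
  | 0 => 1
  | 1 => x1 + x2 + x3
  | 2 => x1*x2 + x1*x3 + x2*x3
  | 3 => x1*x2*x3
  | _ => 0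

/-- Character of the `j`-th super exterior power `Λ_j`. -/
def lamCh (j : ℕ) : F := ∑ r ∈ Finset.range (min 3 j + 1), e r * y ^ (j - r)

/-- Character of the dual `S_j*` of the `j`-th super symmetric power. -/
def sBarCh (j : ℕ) : F := hbar j + y⁻¹ * hbar ((j : ℤ) - 1)

/-- Schur polynomial: `s_μ · Π = det (xᵢ^{μⱼ+3−j})`. -/
def schur (m1 m2 m3 : ℤ) : F := a m1 m2 m3 / P

-- ===== auxiliary lemmas =====

lemma amap_ne (p : MvPolynomial (Fin 4) ℚ) (hp : p ≠ 0) :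
    algebraMap (MvPolynomial (Fin 4) ℚ) F p ≠ 0 := by
  simpa using (map_ne_zero_iff _ (IsFractionRing.injective (MvPolynomial (Fin 4) ℚ) F)).mpr hp

lemma X_sub_ne (i j : Fin 4) (hij : i ≠ j) :
    (MvPolynomial.X i - MvPolynomial.X j : MvPolynomial (Fin 4) ℚ) ≠ 0 := by
  intro h
  exact hij (MvPolynomial.X_injective (sub_eq_zero.mp h))

lemma hx1 : x1 ≠ 0 := amap_ne _ (MvPolynomial.X_ne_zero 0)
lemma hx2 : x2 ≠ 0 := amap_ne _ (MvPolynomial.X_ne_zero 1)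
lemma hx3 : x3 ≠ 0 := amap_ne _ (MvPolynomial.X_ne_zero 2)
lemma hy : y ≠ 0 := amap_ne _ (MvPolynomial.X_ne_zero 3)
lemma h12 : x1 - x2 ≠ 0 := by
  have := amap_ne _ (X_sub_ne 0 1 (by decide))
  simpa [x1, x2, map_sub] using this
lemma h13 : x1 - x3 ≠ 0 := by
  have := amap_ne _ (X_sub_ne 0 2 (by decide))
  simpa [x1, x3, map_sub] using this
lemma h23 : x2 - x3 ≠ 0 := by
  have := amap_ne _ (X_sub_ne 1 2 (by decide))
  simpa [x2, x3, map_sub] using this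
lemma hP : P ≠ 0 := by
  unfold P; exact mul_ne_zero (mul_ne_zero h12 h23) h13

lemma geom2 (v w : F) (m : ℕ) :
    (v - w) * (∑ j ∈ Finset.range (m+1), v ^ j * w ^ (m - j)) = v ^ (m+1) - w ^ (m+1) := by
  simpa [mul_comm] using geom_sum₂_mul v w (m+1)

/-- Dual bialternant, polynomial form. -/
lemma dbialt (u v w : F) (n : ℕ) :
    (v-u)*(w-u)*(w-v) * (∑ i ∈ Finset.range (n+1), ∑ j ∈ Finset.range (n-i+1),
        u^(n-i) * v^(n-j) * w^(i+j))
    = (v*w)^(n+1)*(w-v) - (u*w)^(n+1)*(w-u) + (u*v)^(n+1)*(v-u) := by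
  induction n with
  | zero => simp; ring
  | succ n ih =>
    have hsplit : (∑ i ∈ Finset.range (n+2), ∑ j ∈ Finset.range (n+1-i+1),
          u^(n+1-i) * v^(n+1-j) * w^(i+j))
        = v * w * (∑ i ∈ Finset.range (n+1), ∑ j ∈ Finset.range (n-i+1),
            u^(n-i) * v^(n-j) * w^(i+j))
          + u^(n+1) * ∑ j ∈ Finset.range (n+2), w^j * v^(n+1-j) := by
      rw [Finset.sum_range_succ' (fun i => ∑ j ∈ Finset.range (n+1-i+1),
            u^(n+1-i) * v^(n+1-j) * w^(i+j)) (n+1), Finset.mul_sum, Finset.mul_sum]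
      congr 1
      · apply Finset.sum_congr rfl
        intro i hi
        have hi' : i ≤ n := by simpa [Nat.lt_succ_iff] using hi
        have h1 : n + 1 - (i+1) + 1 = n - i + 1 := by omega
        rw [h1, Finset.mul_sum]
        apply Finset.sum_congr rfl
        intro j hj
        have hj' : j ≤ n - i := by simpa [Nat.lt_succ_iff] using hj
        have h2 : n + 1 - (i+1) = n - i := by omega
        have h3 : v^(n+1-j) = v * v^(n-j) := by
          rw [← pow_succ']; congr 1; omega
        rw [h2, h3]; ring
      · simp only [Nat.sub_zero, zero_add]
        apply Finset.sum_congr rfl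
        intro j hj
        ring
    rw [hsplit]
    have hg := geom2 w v (n+1)
    linear_combination (v*w) * ih + ((v-u)*(w-u)*u^(n+1)) * hg

lemma hbar_nat (m : ℕ) : hbar (m : ℤ)
    = ∑ i ∈ Finset.range (m+1), ∑ j ∈ Finset.range (m-i+1),
        (x1⁻¹)^i * (x2⁻¹)^j * (x3⁻¹)^(m-i-j) := by
  unfold hbar hc
  rw [if_neg (by omega), Int.toNat_natCast]

lemma hbar_poly (m : ℕ) : (x1*x2*x3)^m * hbar (m : ℤ)
    = ∑ i ∈ Finset.range (m+1), ∑ j ∈ Finset.range (m-i+1),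
        x1^(m-i) * x2^(m-j) * x3^(i+j) := by
  rw [hbar_nat, Finset.mul_sum]
  apply Finset.sum_congr rfl
  intro i hi
  have hi' : i ≤ m := by simpa [Nat.lt_succ_iff] using hi
  rw [Finset.mul_sum]
  apply Finset.sum_congr rfl
  intro j hj
  have hj' : j ≤ m - i := by simpa [Nat.lt_succ_iff] using hj
  have a1 : x1^m = x1^(m-i) * x1^i := by rw [← pow_add]; congr 1; omega
  have a2 : x2^m = x2^(m-j) * x2^j := by rw [← pow_add]; congr 1; omega
  have a3 : x3^m = x3^(i+j) * x3^(m-i-j) := by rw [← pow_add]; congr 1; omega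
  have c1 : x1^i * (x1⁻¹)^i = 1 := by
    rw [inv_pow, mul_inv_cancel₀ (pow_ne_zero _ hx1)]
  have c2 : x2^j * (x2⁻¹)^j = 1 := by
    rw [inv_pow, mul_inv_cancel₀ (pow_ne_zero _ hx2)]
  have c3 : x3^(m-i-j) * (x3⁻¹)^(m-i-j) = 1 := by
    rw [inv_pow, mul_inv_cancel₀ (pow_ne_zero _ hx3)]
  calc (x1*x2*x3)^m * ((x1⁻¹)^i * (x2⁻¹)^j * (x3⁻¹)^(m-i-j))
      = (x1^(m-i) * x2^(m-j) * x3^(i+j)) * ((x1^i * (x1⁻¹)^i) * (x2^j * (x2⁻¹)^j)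
          * (x3^(m-i-j) * (x3⁻¹)^(m-i-j))) := by
        rw [mul_pow, mul_pow, a1, a2, a3]; ring
    _ = x1^(m-i) * x2^(m-j) * x3^(i+j) := by rw [c1, c2, c3]; ring

lemma a_expand (m : ℕ) : a m m 0
    = x1^(m+2)*x2^(m+1) - x1^(m+2)*x3^(m+1) - x1^(m+1)*x2^(m+2)
      + x1^(m+1)*x3^(m+2) + x2^(m+2)*x3^(m+1) - x2^(m+1)*x3^(m+2) := by
  unfold a
  have d3 : ∀ (A B C D E f G H I : F),
      Matrix.det !![A,B,C;D,E,f;G,H,I]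
        = A*E*I - A*f*H - B*D*I + B*f*G + C*D*H - C*E*G := by
    intros; simp [Matrix.det_fin_three]; try ring
  rw [d3]
  rw [show ((m:ℤ)+2) = ((m+2 : ℕ) : ℤ) by push_cast; ring,
      show ((m:ℤ)+1) = ((m+1 : ℕ) : ℤ) by push_cast; ring]
  simp only [zpow_natCast, zpow_zero]
  ring

lemma a_eq (m : ℕ) : a m m 0 = P * ((x1*x2*x3)^m * hbar (m : ℤ)) := by
  rw [a_expand, hbar_poly]
  have hd := dbialt x1 x2 x3 m
  unfold P
  linear_combination hd

lemma hbar_zero : hbar 0 = 1 := by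
  unfold hbar hc
  norm_num

lemma hbar_neg : hbar (-1) = 0 := by
  unfold hbar hc
  norm_num

lemma lamCh_two : lamCh 2 = (x1*x2 + x1*x3 + x2*x3) + (x1+x2+x3) * y + y^2 := by
  unfold lamCh
  simp [Finset.sum_range_succ, e]
  ring

lemma lamCh_three_add (n : ℕ) : lamCh (n+3) = y^n * R := by
  unfold lamCh
  have hmin : min 3 (n+3) = 3 := by omega
  rw [hmin]
  simp only [Finset.sum_range_succ, Finset.sum_range_zero, e]
  have e0 : n + 3 - 0 = n + 3 := by omega
  have e1 : n + 3 - 1 = n + 2 := by omega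
  have e2 : n + 3 - 2 = n + 1 := by omega
  have e3 : n + 3 - 3 = n := by omega
  rw [e0, e1, e2, e3]
  unfold R
  ring

lemma main_aux (m : ℕ) (hm : 1 ≤ m) :
    (∑ i ∈ Finset.range (m+1), (-1:F)^i * lamCh (m+2-i) * sBarCh (m-i))
      + (-1:F)^(m+2) * (x1*x2*x3) * y⁻¹
    = R * y^(m-1) * hbar (m : ℤ) := by
  induction m, hm using Nat.le_induction with
  | base =>
    rw [Finset.sum_range_succ, Finset.sum_range_one]
    norm_num
    rw [show (3:ℕ) = 0 + 3 by rfl, lamCh_three_add, lamCh_two]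
    unfold sBarCh
    norm_num [hbar_zero, hbar_neg]
    field_simp [hy]
    unfold R
    ring
  | succ m hm ih =>
    have hyy : y * y⁻¹ = 1 := mul_inv_cancel₀ hy
    rw [Finset.sum_range_succ' (fun i => (-1:F)^i * lamCh (m+1+2-i) * sBarCh (m+1-i)) (m+1)]
    have hre : ∀ i ∈ Finset.range (m+1),
        (-1:F)^(i+1) * lamCh (m+1+2-(i+1)) * sBarCh (m+1-(i+1))
        = -((-1:F)^i * lamCh (m+2-i) * sBarCh (m-i)) := by
      intro i hi
      have e1 : m+1+2-(i+1) = m+2-i := by omega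
      have e2 : m+1-(i+1) = m-i := by omega
      rw [e1, e2, pow_succ]
      ring
    rw [Finset.sum_congr rfl hre, Finset.sum_neg_distrib]
    have hl : lamCh (m+1+2-0) = y^m * R := by
      rw [show m+1+2-0 = m+3 by omega, lamCh_three_add]
    rw [hl]
    have hsb : sBarCh (m+1-0) = hbar ((m:ℤ)+1) + y⁻¹ * hbar (m:ℤ) := by
      rw [show m+1-0 = m+1 by omega]
      unfold sBarCh
      rw [show (((m+1:ℕ)):ℤ) - 1 = (m:ℤ) by push_cast; ring]
      norm_num
    rw [hsb]
    have hy1 : (y:F)^(m+1-1) = y^m := by congr 1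
    have hcast : (((m+1:ℕ)):ℤ) = (m:ℤ)+1 := by push_cast; ring
    rw [hy1, hcast]
    have hpm : ((-1:F))^(m+1+2) = -((-1:F))^(m+2) := by
      rw [show m+1+2 = (m+2)+1 by omega, pow_succ]; ring
    rw [hpm]
    have hy2 : (y:F)^m = y * y^(m-1) := by
      rw [← pow_succ']; congr 1; omega
    rw [hy2]
    linear_combination (-1 : F) * ih + (R * y^(m-1) * hbar (m:ℤ)) * hyy


/-- Alternating-sum character identity along the non-exact Koszul complex `K₂` (`k ≥ 3`):
the one-dimensional homology `x₁x₂x₃/y` (the Berezinian character) corrects the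
telescoping formula for `ch Im d_{k,k−2}`. -/
theorem stmt_12 (k : ℕ) (hk : 3 ≤ k) :
    (∑ i ∈ Finset.range (k - 2 + 1), (-1 : F) ^ i * lamCh (k - i) * sBarCh (k - 2 - i))
      + (-1 : F) ^ k * (x1*x2*x3) * y⁻¹
    = R * y ^ ((k : ℤ) - 3) * (x1*x2*x3) ^ (2 - (k : ℤ)) * a ((k : ℤ) - 2) ((k : ℤ) - 2) 0 / P := by
  obtain ⟨m, rfl⟩ : ∃ m, k = m + 2 := ⟨k - 2, by omega⟩
  have hm : 1 ≤ m := by omega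
  have he3 : (x1*x2*x3)^m ≠ 0 := pow_ne_zero m (mul_ne_zero (mul_ne_zero hx1 hx2) hx3)
  rw [show m+2-2 = m by omega]
  rw [show ((m+2:ℕ):ℤ)-2 = (m:ℤ) by push_cast; ring,
      show ((m+2:ℕ):ℤ)-3 = (m:ℤ)-1 by push_cast; ring,
      show (2:ℤ)-((m+2:ℕ):ℤ) = -(m:ℤ) by push_cast; ring,
      a_eq m]
  rw [show ((m:ℤ)-1) = ((m-1:ℕ):ℤ) by omega, zpow_natCast, zpow_neg, zpow_natCast]
  rw [main_aux m hm]
  field_simp [hP]
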